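/- arXiv:math/9806157 — 3 statements merged into one kernel-verified Lean document; each statement's English description precedes it below -/
import Mathlib

section
/- Let V be a finite-dimensional vector space over a field k of characteristic zero, and let w ∈ Λ²(V) be a bivector. The quantum exterior product α ∧_h β = Σ_{n≥0} (h^n/n!) w^{i₁j₁}···w^{iₙjₙ} (e_{i₁}⌟···⌟e_{iₙ}⌟α) ∧ (e_{j₁}⌟···⌟e_{jₙ}⌟β) (with appropriate signs) is supercommutative: α ∧_h β = (-1)^{|α||β|} β ∧_h α for homogeneous α, β ∈ Λ(V*)[h]. -/
namespace QDR

variable {R : Type} [CommRing R] {m : ℕ}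

/-- Left contraction `e_i ⌟ α` in the basis model of `Λ(V*)`:
forms are functions on index sets. -/
def LC (i : Fin m) (α : Finset (Fin m) → R) : Finset (Fin m) → R :=
  fun S => if i ∈ S then 0 else (-1 : R) ^ (S.filter (fun j => j < i)).card * α (insert i S)

/-- The tensor product `α ⊗ β` as a function of two index sets. -/
def tens (α β : Finset (Fin m) → R) : Finset (Fin m) → Finset (Fin m) → R :=
  fun I J => α I * β J

/-- The operator `L_w(α ⊗ β) = w^{ij} (α ⊣ e_i) ⊗ (e_j ⌟ β)` on tensors. -/
def LwT (w : Fin m → Fin m → R) (T : Finset (Fin m) → Finset (Fin m) → R) :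
    Finset (Fin m) → Finset (Fin m) → R :=
  fun I J => ∑ i : Fin m, ∑ j : Fin m, w i j *
    (if i ∈ I ∨ j ∈ J then 0 else
      (-1 : R) ^ ((I.filter (fun a => i < a)).card + (J.filter (fun b => b < j)).card) *
      T (insert i I) (insert j J))

/-- Exterior multiplication `m : Λ(V*) ⊗ Λ(V*) → Λ(V*)` applied to a tensor. -/
def mulT (T : Finset (Fin m) → Finset (Fin m) → R) : Finset (Fin m) → R :=
  fun S => ∑ I ∈ S.powerset,
    ((-1 : R) ^ (∑ i ∈ I, ((S \ I).filter (fun j => j < i)).card)) * T I (S \ I)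

/-- The ordinary exterior (wedge) product. -/
def wedge (α β : Finset (Fin m) → R) : Finset (Fin m) → R := mulT (tens α β)

/-- The quantum exterior product
`α ∧ₕ β = Σₙ (hⁿ/n!) m(L_wⁿ (α ⊗ β))` determined by the bivector `w`
(the sum is finite: `L_w^{m+1} = 0`). -/
noncomputable def qwedge (w : Fin m → Fin m → R) (h : R) (α β : Finset (Fin m) → R) :
    Finset (Fin m) → R :=
  ∑ n ∈ Finset.range (m + 1),
    (Ring.inverse (n.factorial : R) * h ^ n) • mulT ((LwT w)^[n] (tens α β))

/-- The basis covector `e^i`. -/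
def eform (i : Fin m) : Finset (Fin m) → R := fun S => if S = {i} then 1 else 0

/-- The unit `1 ∈ Λ⁰(V*)`. -/
def oneForm : Finset (Fin m) → R := fun S => if S = ∅ then 1 else 0

/-- The 2-form `Σ_{i<j} A_{ij} e^i ∧ e^j` attached to an (antisymmetric) matrix `A`. -/
def twoForm (A : Fin m → Fin m → R) : Finset (Fin m) → R :=
  fun S => ∑ i : Fin m, ∑ j : Fin m,
    (if i < j then A i j else 0) * wedge (eform i) (eform j) S

/-- Contraction with a bivector: `w ⌟ α = Σ_{i<j} w^{ij} e_i ⌟ e_j ⌟ α`. -/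
def ctr2 (w : Fin m → Fin m → R) (α : Finset (Fin m) → R) : Finset (Fin m) → R :=
  fun S => ∑ i : Fin m, ∑ j : Fin m, (if i < j then w i j else 0) * LC i (LC j α) S

/-- Wedge powers `α^k`. -/
def wpow (α : Finset (Fin m) → R) : ℕ → (Finset (Fin m) → R)
  | 0 => oneForm
  | k + 1 => wedge α (wpow α k)

/-- Homogeneity of exterior degree `p`. -/
def IsHomog (α : Finset (Fin m) → R) (p : ℕ) : Prop := ∀ S, S.card ≠ p → α S = 0

end QDR


namespace QDR

variable {R : Type} [CommRing R] {m : ℕ}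

lemma neg_one_pow_congr' {a b : ℕ} (h : a % 2 = b % 2) : (-1:R)^a = (-1:R)^b := by
  rw [neg_one_pow_eq_pow_mod_two, h, ← neg_one_pow_eq_pow_mod_two]

lemma filter_lt_add' (i : Fin m) (I : Finset (Fin m)) (hi : i ∉ I) :
    (I.filter (fun a => i < a)).card + (I.filter (fun a => a < i)).card = I.card := by
  conv_rhs => rw [← Finset.card_filter_add_card_filter_not (p := fun a => i < a) (s := I)]
  congr 1
  congr 1
  apply Finset.filter_congr
  intro a ha
  simp only [not_lt]
  constructor
  · exact fun h => le_of_lt h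
  · exact fun h => lt_of_le_of_ne h (by rintro rfl; exact hi ha)

lemma eps_add_eps' (I J : Finset (Fin m)) (hd : Disjoint I J) :
    (∑ i ∈ I, (J.filter (fun j => j < i)).card) + (∑ j ∈ J, (I.filter (fun i => i < j)).card)
      = I.card * J.card := by
  simp only [Finset.card_filter]
  rw [Finset.sum_comm (s := J) (t := I)]
  rw [← Finset.sum_add_distrib]
  have : ∀ i ∈ I, ((∑ j ∈ J, if j < i then 1 else 0) + ∑ j ∈ J, if i < j then 1 else 0) = J.card := by
    intro i hi
    rw [← Finset.sum_add_distrib]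
    rw [Finset.card_eq_sum_ones]
    refine Finset.sum_congr rfl fun j hj => ?_
    have hij : i ≠ j := fun h => (Finset.disjoint_left.mp hd hi) (h ▸ hj)
    rcases lt_or_gt_of_ne hij with h | h
    · simp [h, not_lt_of_gt h]
    · simp [h, not_lt_of_gt h]
  rw [Finset.sum_congr rfl this, Finset.sum_const, smul_eq_mul]

/-- Signed swap operator on tensors. -/
def sw (T : Finset (Fin m) → Finset (Fin m) → R) : Finset (Fin m) → Finset (Fin m) → R :=
  fun I J => (-1:R)^(I.card * J.card) * T J I

lemma mulT_sw (T : Finset (Fin m) → Finset (Fin m) → R) : mulT (sw T) = mulT T := by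
  funext S
  unfold mulT sw
  refine Finset.sum_nbij' (fun I => S \ I) (fun I => S \ I) ?_ ?_ ?_ ?_ ?_
  · intro I hI; exact Finset.mem_powerset.mpr (Finset.sdiff_subset)
  · intro I hI; exact Finset.mem_powerset.mpr (Finset.sdiff_subset)
  · intro I hI; exact Finset.sdiff_sdiff_eq_self (Finset.mem_powerset.mp hI)
  · intro I hI; exact Finset.sdiff_sdiff_eq_self (Finset.mem_powerset.mp hI)
  · intro I hI
    rw [Finset.sdiff_sdiff_eq_self (Finset.mem_powerset.mp hI)]
    have he := eps_add_eps' I (S \ I) Finset.disjoint_sdiff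
    have hs : ((-1:R) ^ (∑ i ∈ I, ((S \ I).filter (fun j => j < i)).card)) * (-1:R)^(I.card * (S\I).card)
        = (-1:R) ^ (∑ i ∈ S \ I, (I.filter (fun j => j < i)).card) := by
      rw [← pow_add]
      apply neg_one_pow_congr'
      omega
    calc (-1:R) ^ (∑ i ∈ I, ((S \ I).filter (fun j => j < i)).card) *
          ((-1:R)^(I.card * (S\I).card) * T (S\I) I)
        = ((-1:R) ^ (∑ i ∈ I, ((S \ I).filter (fun j => j < i)).card) * (-1:R)^(I.card * (S\I).card)) * T (S\I) I := by ring
      _ = _ := by rw [hs]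

lemma LwT_sw (w : Fin m → Fin m → R) (hw : ∀ i j, w i j = - w j i)
    (T : Finset (Fin m) → Finset (Fin m) → R) :
    LwT w (sw T) = sw (LwT w T) := by
  funext I J
  show (∑ i : Fin m, ∑ j : Fin m, _) = (-1:R)^(I.card * J.card) * (∑ i : Fin m, ∑ j : Fin m, _)
  rw [Finset.sum_comm]
  rw [Finset.mul_sum]
  refine Finset.sum_congr rfl fun a _ => ?_
  rw [Finset.mul_sum]
  refine Finset.sum_congr rfl fun b _ => ?_
  show w b a * _ = (-1:R)^(I.card*J.card) * (w a b * _)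
  by_cases hc : a ∈ J ∨ b ∈ I
  · rw [if_pos hc, if_pos (Or.comm.mp hc)]
    ring
  · push_neg at hc
    obtain ⟨ha, hb⟩ := hc
    rw [if_neg (by tauto), if_neg (by tauto)]
    show w b a * ((-1:R) ^ ((I.filter (fun x => b < x)).card + (J.filter (fun x => x < a)).card) *
        (sw T (insert b I) (insert a J))) = _
    show _ = (-1:R)^(I.card*J.card) * (w a b *
        ((-1:R) ^ ((J.filter (fun x => a < x)).card + (I.filter (fun x => x < b)).card) *
        T (insert a J) (insert b I)))
    rw [hw b a]
    unfold sw
    rw [Finset.card_insert_of_notMem hb, Finset.card_insert_of_notMem ha]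
    have h1 := filter_lt_add' b I hb
    have h2 := filter_lt_add' a J ha
    have hs : (-1:R) ^ (1 + ((I.filter (fun x => b < x)).card + (J.filter (fun x => x < a)).card)
          + (I.card + 1) * (J.card + 1))
        = (-1:R) ^ (I.card * J.card +
          ((J.filter (fun x => a < x)).card + (I.filter (fun x => x < b)).card)) := by
      apply neg_one_pow_congr'
      have hexp : (I.card + 1) * (J.card + 1) = I.card * J.card + I.card + J.card + 1 := by ring
      rw [hexp]
      generalize I.card * J.card = z
      omega
    linear_combination (T (insert a J) (insert b I) * w a b) * hs

lemma LwT_mul (w : Fin m → Fin m → R) (c : R) (T : Finset (Fin m) → Finset (Fin m) → R) :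
    LwT w (fun I J => c * T I J) = fun I J => c * LwT w T I J := by
  funext I J
  show (∑ i : Fin m, ∑ j : Fin m, _) = c * (∑ i : Fin m, ∑ j : Fin m, _)
  rw [Finset.mul_sum]
  refine Finset.sum_congr rfl fun a _ => ?_
  rw [Finset.mul_sum]
  refine Finset.sum_congr rfl fun b _ => ?_
  dsimp only
  split <;> ring

lemma LwT_iter_mul (w : Fin m → Fin m → R) (c : R) (n : ℕ)
    (T : Finset (Fin m) → Finset (Fin m) → R) :
    (LwT w)^[n] (fun I J => c * T I J) = fun I J => c * (LwT w)^[n] T I J := by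
  induction n generalizing T with
  | zero => rfl
  | succ n ih =>
    rw [Function.iterate_succ_apply, Function.iterate_succ_apply, LwT_mul, ih]

lemma LwT_iter_sw (w : Fin m → Fin m → R) (hw : ∀ i j, w i j = - w j i) (n : ℕ)
    (T : Finset (Fin m) → Finset (Fin m) → R) :
    (LwT w)^[n] (sw T) = sw ((LwT w)^[n] T) := by
  induction n generalizing T with
  | zero => rfl
  | succ n ih =>
    rw [Function.iterate_succ_apply, Function.iterate_succ_apply, LwT_sw w hw, ih]

lemma mulT_mul (c : R) (T : Finset (Fin m) → Finset (Fin m) → R) :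
    mulT (fun I J => c * T I J) = fun S => c * mulT T S := by
  funext S
  unfold mulT
  rw [Finset.mul_sum]
  refine Finset.sum_congr rfl fun I _ => ?_
  ring

end QDR

namespace QDR

/-- Homogeneity of total degree `p` in `Λ(V*)[h]`, where elements of `Λ^k(V*)`
have degree `k` and `h` has degree `2`. -/
def IsHomogH {k : Type} [Field k] {m : ℕ} (α : Finset (Fin m) → Polynomial k) (p : ℕ) : Prop :=
  ∀ S n, (α S).coeff n ≠ 0 → S.card + 2 * n = p

/-- For a bivector `w ∈ Λ²(V)` on a finite dimensional vector space `V`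
over a field of characteristic zero, the quantum exterior product on `Λ(V*)[h]`
is supercommutative: `α ∧ₕ β = (-1)^{|α||β|} β ∧ₕ α` for homogeneous `α`, `β`. -/
theorem quantum_exterior_product_supercommutative
    {k : Type} [Field k] [CharZero k] {m : ℕ}
    (w : Fin m → Fin m → k) (hw : ∀ i j, w i j = - w j i)
    (p q : ℕ) (α β : Finset (Fin m) → Polynomial k)
    (hα : IsHomogH α p) (hβ : IsHomogH β q) :
    qwedge (fun i j => Polynomial.C (w i j)) Polynomial.X α β
      = ((-1 : Polynomial k) ^ (p * q)) •
        qwedge (fun i j => Polynomial.C (w i j)) Polynomial.X β α := by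
  have hw' : ∀ i j, (Polynomial.C (w i j)) = - (Polynomial.C (w j i)) := by
    intro i j; rw [hw i j]; simp
  have key : tens α β = fun I J => ((-1:Polynomial k)^(p*q)) * sw (tens β α) I J := by
    funext I J
    show α I * β J = ((-1:Polynomial k)^(p*q)) * ((-1:Polynomial k)^(I.card * J.card) * (β J * α I))
    by_cases hα0 : α I = 0
    · simp [hα0]
    by_cases hβ0 : β J = 0
    · simp [hβ0]
    have hpI : I.card % 2 = p % 2 := by
      have : ∃ n, (α I).coeff n ≠ 0 := by
        by_contra hcon
        push_neg at hcon
        exact hα0 (Polynomial.ext fun n => by simp [hcon n])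
      obtain ⟨n, hn⟩ := this
      have := hα I n hn; omega
    have hqJ : J.card % 2 = q % 2 := by
      have : ∃ n, (β J).coeff n ≠ 0 := by
        by_contra hcon
        push_neg at hcon
        exact hβ0 (Polynomial.ext fun n => by simp [hcon n])
      obtain ⟨n, hn⟩ := this
      have := hβ J n hn; omega
    have h1 : (-1:Polynomial k)^(I.card*J.card) = (-1:Polynomial k)^(p*q) :=
      neg_one_pow_congr' (by rw [Nat.mul_mod, hpI, hqJ, ← Nat.mul_mod])
    rw [h1, ← mul_assoc, ← pow_add]
    have h2 : (-1:Polynomial k)^(p*q+p*q) = 1 := Even.neg_one_pow ⟨p*q, by ring⟩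
    rw [h2, one_mul]
    ring
  have main : ∀ n S, mulT ((LwT (fun i j => Polynomial.C (w i j)))^[n] (tens α β)) S
      = ((-1:Polynomial k)^(p*q)) *
        mulT ((LwT (fun i j => Polynomial.C (w i j)))^[n] (tens β α)) S := by
    intro n S
    rw [key, LwT_iter_mul]
    simp only [LwT_iter_sw (fun i j => Polynomial.C (w i j)) (fun i j => hw' i j) n]
    rw [mulT_mul, mulT_sw]
  funext S
  simp only [qwedge, Finset.sum_apply, Pi.smul_apply, smul_eq_mul]
  rw [Finset.mul_sum]
  refine Finset.sum_congr rfl fun n _ => ?_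
  rw [main n S]
  ring


end QDR
end

section
/- Let w₁,...,w_m ∈ Λ²(V) be bivectors and h₁,...,h_m formal parameters. The multiparameter quantum exterior product α ∧_{h⃗} β = m(exp(h₁L_{w₁} + ··· + h_m L_{w_m})(α⊗β)) is supercommutative and associative on Λ(V*)[h₁,...,h_m]. -/
namespace QDR

section Basic
variable {R : Type} [CommRing R] {m : ℕ}

/-- parity transfer for signs -/
lemma npow_eq_npow (a b : ℕ) (h : a % 2 = b % 2) : ((-1 : R)) ^ a = (-1) ^ b := by
  rw [neg_one_pow_eq_pow_mod_two, h, ← neg_one_pow_eq_pow_mod_two]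

lemma npow_eq_neg_npow (a b : ℕ) (h : (a + 1) % 2 = b % 2) :
    ((-1 : R)) ^ b = -(-1) ^ a := by
  rw [← npow_eq_npow (a + 1) b h, pow_succ, mul_neg_one]

/-- number of inversions between two index sets -/
def inv2 (I J : Finset (Fin m)) : ℕ := ∑ i ∈ I, (J.filter (fun j => j < i)).card

lemma card_filter_lt_add_gt {i : Fin m} {I : Finset (Fin m)} (h : i ∉ I) :
    (I.filter (fun a => a < i)).card + (I.filter (fun a => i < a)).card = I.card := by
  have heq : I.filter (fun a => i < a) = I.filter (fun a => ¬ a < i) := by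
    apply Finset.filter_congr
    intro a ha
    have hne : a ≠ i := by rintro rfl; exact h ha
    simp only [not_lt, eq_iff_iff]
    exact ⟨le_of_lt, fun h' => lt_of_le_of_ne h' (Ne.symm hne)⟩
  rw [heq, Finset.card_filter_add_card_filter_not (s := I) (p := fun a => a < i)]

lemma inv2_comm_count {I J : Finset (Fin m)} :
    (∑ j ∈ J, (I.filter (fun a => a < j)).card) = ∑ i ∈ I, (J.filter (fun b => i < b)).card := by
  simp only [Finset.card_filter]
  rw [Finset.sum_comm]

lemma inv2_swap {I J : Finset (Fin m)} (h : Disjoint I J) :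
    inv2 I J + inv2 J I = I.card * J.card := by
  have h2 : inv2 J I = ∑ i ∈ I, (J.filter (fun b => i < b)).card := by
    unfold inv2; exact inv2_comm_count
  rw [h2]
  unfold inv2
  rw [← Finset.sum_add_distrib]
  have : ∀ i ∈ I, (J.filter (fun j => j < i)).card + (J.filter (fun b => i < b)).card = J.card := by
    intro i hi
    exact card_filter_lt_add_gt (Finset.disjoint_left.mp h hi)
  rw [Finset.sum_congr rfl this, Finset.sum_const, smul_eq_mul]

lemma inv2_union_left {I J K : Finset (Fin m)} (h : Disjoint I J) :
    inv2 (I ∪ J) K = inv2 I K + inv2 J K := Finset.sum_union h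

lemma inv2_union_right {I J K : Finset (Fin m)} (h : Disjoint J K) :
    inv2 I (J ∪ K) = inv2 I J + inv2 I K := by
  unfold inv2
  rw [← Finset.sum_add_distrib]
  apply Finset.sum_congr rfl
  intro i _
  rw [Finset.filter_union, Finset.card_union_of_disjoint]
  exact Finset.disjoint_filter_filter h

lemma sum_powerset_sdiff {M : Type} [AddCommMonoid M] (S : Finset (Fin m)) (f : Finset (Fin m) → M) :
    ∑ I ∈ S.powerset, f I = ∑ I ∈ S.powerset, f (S \ I) := by
  apply Finset.sum_nbij' (fun I => S \ I) (fun I => S \ I)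
  · intro a ha; simp only [Finset.mem_powerset] at *; exact Finset.sdiff_subset
  · intro a ha; simp only [Finset.mem_powerset] at *; exact Finset.sdiff_subset
  · intro a ha; simp only [Finset.mem_powerset] at ha; exact sdiff_sdiff_eq_self ha
  · intro a ha; simp only [Finset.mem_powerset] at ha; exact sdiff_sdiff_eq_self ha
  · intro a ha
    simp only [Finset.mem_powerset] at ha
    rw [sdiff_sdiff_eq_self ha]

lemma sum_powerset_pair {M : Type} [AddCommMonoid M] (S : Finset (Fin m))
    (f : Finset (Fin m) → Finset (Fin m) → M) :
    ∑ P ∈ S.powerset, ∑ I ∈ P.powerset, f I P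
      = ∑ I ∈ S.powerset, ∑ J ∈ (S \ I).powerset, f I (I ∪ J) := by
  rw [Finset.sum_sigma' (S.powerset) (fun P => P.powerset) (fun P I => f I P),
      Finset.sum_sigma' (S.powerset) (fun I => (S \ I).powerset) (fun I J => f I (I ∪ J))]
  apply Finset.sum_nbij' (fun x => ⟨x.2, x.1 \ x.2⟩) (fun x => ⟨x.1 ∪ x.2, x.1⟩)
  · rintro ⟨P, I⟩ h
    simp only [Finset.mem_sigma, Finset.mem_powerset] at *
    exact ⟨h.2.trans h.1, Finset.sdiff_subset_sdiff h.1 (le_refl _)⟩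
  · rintro ⟨I, J⟩ h
    simp only [Finset.mem_sigma, Finset.mem_powerset] at *
    constructor
    · exact Finset.union_subset h.1 (h.2.trans Finset.sdiff_subset)
    · exact Finset.subset_union_left
  · rintro ⟨P, I⟩ h
    simp only [Finset.mem_sigma, Finset.mem_powerset] at h
    simp only [Sigma.mk.inj_iff, heq_eq_eq]
    exact ⟨Finset.union_sdiff_of_subset h.2, trivial⟩
  · rintro ⟨I, J⟩ h
    simp only [Finset.mem_sigma, Finset.mem_powerset] at h
    simp only [Sigma.mk.inj_iff, heq_eq_eq]
    exact ⟨trivial, Finset.union_sdiff_cancel_left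
      (Finset.disjoint_of_subset_right h.2 Finset.disjoint_sdiff)⟩
  · rintro ⟨P, I⟩ h
    simp only [Finset.mem_sigma, Finset.mem_powerset] at h
    simp only []
    rw [Finset.union_sdiff_of_subset h.2]

end Basic
end QDR
namespace QDR
section Wedge
variable {R : Type} [CommRing R] {m : ℕ}

lemma mulT_def' (T : Finset (Fin m) → Finset (Fin m) → R) (S : Finset (Fin m)) :
    mulT T S = ∑ I ∈ S.powerset, ((-1 : R) ^ (inv2 I (S \ I))) * T I (S \ I) := rfl

theorem wedge_assoc (α β γ : Finset (Fin m) → R) :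
    wedge (wedge α β) γ = wedge α (wedge β γ) := by
  funext S
  show mulT (tens (wedge α β) γ) S = mulT (tens α (wedge β γ)) S
  simp only [mulT_def', tens, wedge]
  calc
    ∑ P ∈ S.powerset, (-1 : R) ^ inv2 P (S \ P) * (mulT (tens α β) P * γ (S \ P))
      = ∑ P ∈ S.powerset, ∑ I ∈ P.powerset,
          (-1 : R) ^ (inv2 I (P \ I) + inv2 P (S \ P)) * (α I * (β (P \ I) * γ (S \ P))) := by
        apply Finset.sum_congr rfl
        intro P _
        rw [mulT_def', Finset.sum_mul, Finset.mul_sum]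
        apply Finset.sum_congr rfl
        intro I _
        rw [pow_add, tens]
        ring
    _ = ∑ I ∈ S.powerset, ∑ J ∈ (S \ I).powerset,
          (-1 : R) ^ (inv2 I ((I ∪ J) \ I) + inv2 (I ∪ J) (S \ (I ∪ J)))
            * (α I * (β ((I ∪ J) \ I) * γ (S \ (I ∪ J)))) :=
        sum_powerset_pair S (fun I P =>
          (-1 : R) ^ (inv2 I (P \ I) + inv2 P (S \ P)) * (α I * (β (P \ I) * γ (S \ P))))
    _ = ∑ I ∈ S.powerset, (-1 : R) ^ inv2 I (S \ I) * (α I * mulT (tens β γ) (S \ I)) := by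
        apply Finset.sum_congr rfl
        intro I hI
        rw [Finset.mem_powerset] at hI
        rw [mulT_def', Finset.mul_sum, Finset.mul_sum]
        apply Finset.sum_congr rfl
        intro J hJ
        rw [Finset.mem_powerset] at hJ
        have hIJ : Disjoint I J :=
          Finset.disjoint_of_subset_right hJ Finset.disjoint_sdiff
        have h1 : (I ∪ J) \ I = J := Finset.union_sdiff_cancel_left hIJ
        have h2 : (S \ I) \ J = S \ (I ∪ J) := sdiff_sdiff_left
        have h3 : S \ I = J ∪ (S \ (I ∪ J)) := by
          rw [← h2]; exact (Finset.union_sdiff_of_subset hJ).symm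
        have hJK : Disjoint J (S \ (I ∪ J)) :=
          Finset.disjoint_of_subset_left Finset.subset_union_right Finset.disjoint_sdiff
        have hsign : inv2 I ((I ∪ J) \ I) + inv2 (I ∪ J) (S \ (I ∪ J))
            = inv2 I (S \ I) + inv2 J ((S \ I) \ J) := by
          rw [h1, h2, h3, inv2_union_left hIJ, inv2_union_right hJK]
          ring
        rw [hsign, h1, h2, tens, pow_add]
        ring

/-- super-transpose of a tensor -/
def sigmaT (T : Finset (Fin m) → Finset (Fin m) → R) : Finset (Fin m) → Finset (Fin m) → R :=
  fun I J => (-1 : R) ^ (I.card * J.card) * T J I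

lemma mulT_sigmaT (T : Finset (Fin m) → Finset (Fin m) → R) : mulT (sigmaT T) = mulT T := by
  funext S
  rw [mulT_def', mulT_def',
    sum_powerset_sdiff S (fun I => (-1 : R) ^ (inv2 I (S \ I)) * T I (S \ I))]
  apply Finset.sum_congr rfl
  intro I hI
  rw [Finset.mem_powerset] at hI
  rw [sdiff_sdiff_eq_self hI, sigmaT]
  have hd : Disjoint I (S \ I) := Finset.disjoint_sdiff
  have hs := inv2_swap hd
  rw [← mul_assoc, ← pow_add]
  congr 1
  apply npow_eq_npow
  omega

lemma LwT_sigmaT {w : Fin m → Fin m → R} (hw : ∀ i j, w i j = - w j i)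
    (T : Finset (Fin m) → Finset (Fin m) → R) :
    LwT w (sigmaT T) = sigmaT (LwT w T) := by
  funext I J
  show (LwT w (sigmaT T)) I J = (-1 : R) ^ (I.card * J.card) * (LwT w T) J I
  unfold LwT
  rw [Finset.sum_comm (f := fun i j => w i j *
    (if i ∈ J ∨ j ∈ I then 0 else
      (-1 : R) ^ ((J.filter (fun a => i < a)).card + (I.filter (fun b => b < j)).card) *
      T (insert i J) (insert j I))), Finset.mul_sum]
  apply Finset.sum_congr rfl
  intro x _
  rw [Finset.mul_sum]
  apply Finset.sum_congr rfl
  intro y _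
  by_cases hc : x ∈ I ∨ y ∈ J
  · rw [if_pos hc, if_pos (Or.symm hc)]; ring
  · push_neg at hc
    obtain ⟨hx, hy⟩ := hc
    rw [if_neg (by tauto), if_neg (by tauto), sigmaT,
      Finset.card_insert_of_notMem hx, Finset.card_insert_of_notMem hy, hw y x]
    have e1 := card_filter_lt_add_gt (i := x) (I := I) hx
    have e2 := card_filter_lt_add_gt (i := y) (I := J) hy
    have hcoef : ((-1 : R)) ^ ((I.filter (fun a => x < a)).card + (J.filter (fun b => b < y)).card)
        * (-1) ^ ((I.card + 1) * (J.card + 1))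
        = -((-1) ^ (I.card * J.card) *
            (-1) ^ ((J.filter (fun a => y < a)).card + (I.filter (fun b => b < x)).card)) := by
      rw [← pow_add, ← pow_add]
      apply npow_eq_neg_npow
      have e3 : (I.card + 1) * (J.card + 1) = I.card * J.card + I.card + J.card + 1 := by ring
      rw [e3]
      generalize I.card * J.card = pq
      omega
    linear_combination (w x y * T (insert y J) (insert x I)) * hcoef

end Wedge
end QDR
namespace QDR
section Super
variable {R : Type} [CommRing R] {m : ℕ}

lemma LwT_smul (w : Fin m → Fin m → R) (c : R) (T : Finset (Fin m) → Finset (Fin m) → R) :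
    LwT w (c • T) = c • LwT w T := by
  funext I J
  simp only [LwT, Pi.smul_apply, smul_eq_mul, Finset.mul_sum]
  apply Finset.sum_congr rfl; intro i _
  apply Finset.sum_congr rfl; intro j _
  split_ifs <;> ring

lemma mulT_smul (c : R) (T : Finset (Fin m) → Finset (Fin m) → R) :
    mulT (c • T) = c • mulT T := by
  funext S
  simp only [mulT, Pi.smul_apply, smul_eq_mul, Finset.mul_sum]
  apply Finset.sum_congr rfl; intro I _
  ring

lemma LwT_iter_smul (w : Fin m → Fin m → R) (n : ℕ) (c : R)
    (T : Finset (Fin m) → Finset (Fin m) → R) :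
    (LwT w)^[n] (c • T) = c • (LwT w)^[n] T := by
  induction n generalizing T with
  | zero => rfl
  | succ n ih => rw [Function.iterate_succ_apply, Function.iterate_succ_apply, LwT_smul, ih]

lemma LwT_iter_sigmaT {w : Fin m → Fin m → R} (hw : ∀ i j, w i j = - w j i) (n : ℕ)
    (T : Finset (Fin m) → Finset (Fin m) → R) :
    (LwT w)^[n] (sigmaT T) = sigmaT ((LwT w)^[n] T) := by
  induction n generalizing T with
  | zero => rfl
  | succ n ih => rw [Function.iterate_succ_apply, Function.iterate_succ_apply,
      LwT_sigmaT hw, ih]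

lemma sigmaT_tens {p q : ℕ} {α β : Finset (Fin m) → R}
    (hα : IsHomog α p) (hβ : IsHomog β q) :
    sigmaT (tens β α) = ((-1 : R) ^ (p * q)) • tens α β := by
  funext I J
  simp only [sigmaT, tens, Pi.smul_apply, smul_eq_mul]
  by_cases h1 : I.card = p
  · by_cases h2 : J.card = q
    · rw [h1, h2]; ring
    · rw [hβ J h2]; ring
  · rw [hα I h1]; ring

theorem qwedge_supercomm {w : Fin m → Fin m → R} (hw : ∀ i j, w i j = - w j i)
    {p q : ℕ} {α β : Finset (Fin m) → R} (hα : IsHomog α p) (hβ : IsHomog β q) (h : R) :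
    qwedge w h α β = ((-1 : R) ^ (p * q)) • qwedge w h β α := by
  have hone : ((-1 : R) ^ (p * q)) * ((-1 : R) ^ (p * q)) = 1 := by
    rw [← pow_add, npow_eq_npow (p * q + p * q) 0 (by omega), pow_zero]
  unfold qwedge
  rw [Finset.smul_sum]
  apply Finset.sum_congr rfl
  intro n _
  have key : ((-1 : R) ^ (p * q)) • mulT ((LwT w)^[n] (tens β α))
      = mulT ((LwT w)^[n] (tens α β)) := by
    rw [← mulT_sigmaT ((LwT w)^[n] (tens β α)), ← LwT_iter_sigmaT hw,
      sigmaT_tens hα hβ, LwT_iter_smul, mulT_smul, smul_smul, hone, one_smul]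
  rw [← key, smul_comm]

end Super
end QDR
namespace QDR
section Ops
variable {R : Type} [CommRing R] {m : ℕ}

lemma LC_add (i : Fin m) (α β : Finset (Fin m) → R) : LC i (α + β) = LC i α + LC i β := by
  funext S
  simp only [LC, Pi.add_apply]
  split_ifs <;> ring

lemma LC_smul (i : Fin m) (c : R) (α : Finset (Fin m) → R) : LC i (c • α) = c • LC i α := by
  funext S
  simp only [LC, Pi.smul_apply, smul_eq_mul]
  split_ifs <;> ring

/-- `LC i` as a linear endomorphism. -/
def LCl (i : Fin m) : Module.End R (Finset (Fin m) → R) where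
  toFun := LC i
  map_add' := LC_add i
  map_smul' := LC_smul i

lemma mulT_add (T T' : Finset (Fin m) → Finset (Fin m) → R) :
    mulT (T + T') = mulT T + mulT T' := by
  funext S
  simp only [mulT, Pi.add_apply, ← Finset.sum_add_distrib]
  apply Finset.sum_congr rfl
  intro I _
  ring

/-- exterior multiplication as a linear map. -/
def mulL : (Finset (Fin m) → Finset (Fin m) → R) →ₗ[R] (Finset (Fin m) → R) where
  toFun := mulT
  map_add' := mulT_add
  map_smul' := mulT_smul

/-- contraction acting in the first slot of a tensor. -/
def tAl (i : Fin m) : Module.End R (Finset (Fin m) → Finset (Fin m) → R) where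
  toFun T := fun I J => LC i (fun I' => T I' J) I
  map_add' T T' := by funext I J; simp only [LC, Pi.add_apply]; split_ifs <;> ring
  map_smul' c T := by
    funext I J
    simp only [LC, Pi.smul_apply, smul_eq_mul, RingHom.id_apply]
    split_ifs <;> ring

/-- contraction acting in the second slot of a tensor. -/
def tBl (j : Fin m) : Module.End R (Finset (Fin m) → Finset (Fin m) → R) where
  toFun T := fun I J => LC j (T I) J
  map_add' T T' := by funext I J; simp only [LC, Pi.add_apply]; split_ifs <;> ring
  map_smul' c T := by
    funext I J
    simp only [LC, Pi.smul_apply, smul_eq_mul, RingHom.id_apply]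
    split_ifs <;> ring

/-- parity operator in the first slot. -/
def pAl : Module.End R (Finset (Fin m) → Finset (Fin m) → R) where
  toFun T := fun I J => (-1 : R) ^ I.card * T I J
  map_add' T T' := by funext I J; simp only [Pi.add_apply]; ring
  map_smul' c T := by
    funext I J; simp only [Pi.smul_apply, smul_eq_mul, RingHom.id_apply]; ring

lemma tAl_apply (i : Fin m) (T : Finset (Fin m) → Finset (Fin m) → R) (I J : Finset (Fin m)) :
    tAl i T I J = if i ∈ I then 0
      else (-1 : R) ^ (I.filter (fun j => j < i)).card * T (insert i I) J := rfl

lemma tBl_apply (j : Fin m) (T : Finset (Fin m) → Finset (Fin m) → R) (I J : Finset (Fin m)) :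
    tBl j T I J = if j ∈ J then 0
      else (-1 : R) ^ (J.filter (fun a => a < j)).card * T I (insert j J) := rfl

lemma pAl_apply (T : Finset (Fin m) → Finset (Fin m) → R) (I J : Finset (Fin m)) :
    pAl T I J = (-1 : R) ^ I.card * T I J := rfl

/-- inversions against an inserted element, left version -/
lemma inv2_insert_left {t : Fin m} {I K : Finset (Fin m)} (ht : t ∉ I) :
    inv2 (insert t I) K = inv2 I K + (K.filter (fun j => j < t)).card := by
  unfold inv2
  rw [Finset.sum_insert ht, add_comm]

/-- inversions against an inserted element, right version -/
lemma inv2_insert_right {t : Fin m} {I K : Finset (Fin m)} (ht : t ∉ K) :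
    inv2 I (insert t K) = inv2 I K + (I.filter (fun i => t < i)).card := by
  unfold inv2
  rw [Finset.card_filter (fun i => t < i) I, ← Finset.sum_add_distrib]
  apply Finset.sum_congr rfl
  intro i _
  rw [Finset.filter_insert]
  split_ifs with h
  · rw [Finset.card_insert_of_notMem (fun hc => ht (Finset.mem_of_mem_filter t hc))]
  · rw [add_zero]

/-- anticommutation of contractions. -/
lemma LC_anticomm (i j : Fin m) (g : Finset (Fin m) → R) :
    LC i (LC j g) = -(LC j (LC i g)) := by
  funext S
  simp only [LC, Pi.neg_apply]
  by_cases hi : i ∈ S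
  · rw [if_pos hi]
    by_cases hj : j ∈ S
    · rw [if_pos hj, neg_zero]
    · rw [if_neg hj, if_pos (Finset.mem_insert_of_mem hi), mul_zero, neg_zero]
  · rw [if_neg hi]
    by_cases hj : j ∈ S
    · rw [if_pos hj, if_pos (Finset.mem_insert_of_mem hj), mul_zero, neg_zero]
    · rw [if_neg hj]
      by_cases hij : i = j
      · subst hij
        rw [if_pos (Finset.mem_insert_self i S)]
        ring
      · rw [if_neg (by
              simp only [Finset.mem_insert]
              rintro (h | h)
              exacts [hij h.symm, hj h]),
            if_neg (by
              simp only [Finset.mem_insert]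
              rintro (h | h)
              exacts [hij h, hi h]),
            Finset.insert_comm]
        rw [Finset.filter_insert, Finset.filter_insert]
        rcases lt_or_gt_of_ne hij with hlt | hgt
        · rw [if_neg (not_lt.mpr (le_of_lt hlt)), if_pos hlt,
            Finset.card_insert_of_notMem (fun hc => hi (Finset.mem_of_mem_filter i hc))]
          rw [← mul_assoc, ← mul_assoc, ← pow_add, ← pow_add]
          rw [npow_eq_neg_npow
              ((S.filter (fun a => a < j)).card + (S.filter (fun a => a < i)).card)
              ((S.filter (fun a => a < i)).card + ((S.filter (fun a => a < j)).card + 1))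
              (by omega)]
          ring
        · rw [if_pos hgt, if_neg (not_lt.mpr (le_of_lt hgt)),
            Finset.card_insert_of_notMem (fun hc => hj (Finset.mem_of_mem_filter j hc))]
          rw [← mul_assoc, ← mul_assoc, ← pow_add, ← pow_add]
          rw [npow_eq_neg_npow
              ((S.filter (fun a => a < j)).card + ((S.filter (fun a => a < i)).card + 1))
              ((S.filter (fun a => a < i)).card + (S.filter (fun a => a < j)).card)
              (by omega)]
          ring

/-- the operator relations -/
lemma rel_AA (i j : Fin m) :
    (tAl i * tAl j : Module.End R (Finset (Fin m) → Finset (Fin m) → R))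
      = -(tAl j * tAl i) := by
  apply LinearMap.ext
  intro T
  funext I J
  have := congrFun (LC_anticomm i j (fun I'' => T I'' J)) I
  simpa [Module.End.mul_apply, LinearMap.neg_apply, tAl, LC] using this

lemma rel_BB (i j : Fin m) :
    (tBl i * tBl j : Module.End R (Finset (Fin m) → Finset (Fin m) → R))
      = -(tBl j * tBl i) := by
  apply LinearMap.ext
  intro T
  funext I J
  have := congrFun (LC_anticomm i j (T I)) J
  simpa [Module.End.mul_apply, LinearMap.neg_apply, tBl, LC] using this

lemma rel_AB (i j : Fin m) :
    (tAl i * tBl j : Module.End R (Finset (Fin m) → Finset (Fin m) → R))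
      = tBl j * tAl i := by
  apply LinearMap.ext
  intro T
  funext I J
  simp only [Module.End.mul_apply, tAl_apply, tBl_apply]
  split_ifs <;> ring

lemma rel_PA (i : Fin m) :
    (pAl * tAl i : Module.End R (Finset (Fin m) → Finset (Fin m) → R))
      = -(tAl i * pAl) := by
  apply LinearMap.ext
  intro T
  funext I J
  simp only [Module.End.mul_apply, LinearMap.neg_apply, Pi.neg_apply, tAl_apply, pAl_apply]
  split_ifs with h
  · ring
  · rw [Finset.card_insert_of_notMem h, pow_succ]
    ring

lemma rel_PB (j : Fin m) :
    (pAl * tBl j : Module.End R (Finset (Fin m) → Finset (Fin m) → R))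
      = tBl j * pAl := by
  apply LinearMap.ext
  intro T
  funext I J
  simp only [Module.End.mul_apply, tBl_apply, pAl_apply]
  split_ifs <;> ring

lemma rel_PP :
    (pAl * pAl : Module.End R (Finset (Fin m) → Finset (Fin m) → R)) = 1 := by
  apply LinearMap.ext
  intro T
  funext I J
  simp only [Module.End.mul_apply, Module.End.one_apply, pAl_apply]
  rw [← mul_assoc, ← pow_add, npow_eq_npow (I.card + I.card) 0 (by omega), pow_zero, one_mul]

end Ops
end QDR
namespace QDR
section Comp
variable {R : Type} [CommRing R] {m : ℕ}

lemma tens_sum_left {ι : Type} (s : Finset ι) (f : ι → Finset (Fin m) → R)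
    (β : Finset (Fin m) → R) :
    tens (∑ x ∈ s, f x) β = ∑ x ∈ s, tens (f x) β := by
  funext I J
  simp only [tens, Finset.sum_apply, Finset.sum_mul]

lemma tens_smul_left (c : R) (α β : Finset (Fin m) → R) :
    tens (c • α) β = c • tens α β := by
  funext I J
  simp only [tens, Pi.smul_apply, smul_eq_mul]
  ring

lemma tens_sum_right {ι : Type} (s : Finset ι) (α : Finset (Fin m) → R)
    (f : ι → Finset (Fin m) → R) :
    tens α (∑ x ∈ s, f x) = ∑ x ∈ s, tens α (f x) := by
  funext I J
  simp only [tens, Finset.sum_apply, Finset.mul_sum]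

lemma tens_smul_right (c : R) (α β : Finset (Fin m) → R) :
    tens α (c • β) = c • tens α β := by
  funext I J
  simp only [tens, Pi.smul_apply, smul_eq_mul]
  ring

lemma LCl_apply (i : Fin m) (α : Finset (Fin m) → R) : LCl i α = LC i α := rfl

lemma ctr2_eq (w : Fin m → Fin m → R) (α : Finset (Fin m) → R) :
    ctr2 w α = ∑ i : Fin m, ∑ j : Fin m, (if i < j then w i j else 0) • LC i (LC j α) := by
  funext S
  simp only [ctr2, Finset.sum_apply, Pi.smul_apply, smul_eq_mul]

/-- the contraction operator as an endomorphism -/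
def CL (w : Fin m → Fin m → R) : Module.End R (Finset (Fin m) → R) :=
  ∑ i : Fin m, ∑ j : Fin m, (if i < j then w i j else 0) • (LCl i * LCl j)

lemma CL_apply (w : Fin m → Fin m → R) (α : Finset (Fin m) → R) : CL w α = ctr2 w α := by
  rw [ctr2_eq]
  simp only [CL, LinearMap.sum_apply, LinearMap.smul_apply, Module.End.mul_apply, LCl_apply]

/-- first-slot contraction operator -/
def AL (w : Fin m → Fin m → R) : Module.End R (Finset (Fin m) → Finset (Fin m) → R) :=
  ∑ i : Fin m, ∑ j : Fin m, (if i < j then w i j else 0) • (tAl i * tAl j)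

/-- second-slot contraction operator -/
def BL (w : Fin m → Fin m → R) : Module.End R (Finset (Fin m) → Finset (Fin m) → R) :=
  ∑ i : Fin m, ∑ j : Fin m, (if i < j then w i j else 0) • (tBl i * tBl j)

/-- the cross operator `L_w` as an endomorphism -/
def LL (w : Fin m → Fin m → R) : Module.End R (Finset (Fin m) → Finset (Fin m) → R) :=
  ∑ i : Fin m, ∑ j : Fin m, (w i j) • (pAl * (tAl i * tBl j))

lemma LL_apply (w : Fin m → Fin m → R) (T : Finset (Fin m) → Finset (Fin m) → R) :
    LL w T = LwT w T := by
  funext I J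
  simp only [LL, LinearMap.sum_apply, Finset.sum_apply, LinearMap.smul_apply, Pi.smul_apply,
    smul_eq_mul, Module.End.mul_apply, LwT]
  apply Finset.sum_congr rfl; intro i _
  apply Finset.sum_congr rfl; intro j _
  rw [pAl_apply, tAl_apply]
  by_cases h1 : i ∈ I
  · rw [if_pos h1, if_pos (Or.inl h1)]; ring
  · rw [if_neg h1, tBl_apply]
    by_cases h2 : j ∈ J
    · rw [if_pos h2, if_pos (Or.inr h2)]; ring
    · rw [if_neg h2, if_neg (not_or.mpr ⟨h1, h2⟩)]
      have e := card_filter_lt_add_gt (i := i) (I := I) h1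
      have hsg : ((-1 : R)) ^ I.card * ((-1) ^ ((I.filter (fun a => a < i)).card)
          * (-1) ^ ((J.filter (fun a => a < j)).card))
          = (-1) ^ ((I.filter (fun a => i < a)).card + (J.filter (fun a => a < j)).card) := by
        rw [← pow_add, ← pow_add]
        exact npow_eq_npow _ _ (by omega)
      linear_combination (w i j * T (insert i I) (insert j J)) * hsg

lemma tAl_tens (i : Fin m) (α β : Finset (Fin m) → R) :
    tAl i (tens α β) = tens (LC i α) β := by
  funext I J
  simp only [tAl_apply, tens, LC]
  split_ifs <;> ring

lemma tBl_tens (j : Fin m) (α β : Finset (Fin m) → R) :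
    tBl j (tens α β) = tens α (LC j β) := by
  funext I J
  simp only [tBl_apply, tens, LC]
  split_ifs <;> ring

lemma AL_tens (w : Fin m → Fin m → R) (α β : Finset (Fin m) → R) :
    AL w (tens α β) = tens (ctr2 w α) β := by
  rw [ctr2_eq, tens_sum_left]
  simp only [AL, LinearMap.sum_apply, LinearMap.smul_apply, Module.End.mul_apply]
  apply Finset.sum_congr rfl; intro i _
  rw [tens_sum_left]
  apply Finset.sum_congr rfl; intro j _
  rw [tens_smul_left, tAl_tens, tAl_tens]

lemma BL_tens (w : Fin m → Fin m → R) (α β : Finset (Fin m) → R) :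
    BL w (tens α β) = tens α (ctr2 w β) := by
  rw [ctr2_eq, tens_sum_right]
  simp only [BL, LinearMap.sum_apply, LinearMap.smul_apply, Module.End.mul_apply]
  apply Finset.sum_congr rfl; intro i _
  rw [tens_sum_right]
  apply Finset.sum_congr rfl; intro j _
  rw [tens_smul_right, tBl_tens, tBl_tens]

end Comp
end QDR
namespace QDR
section K0sec
variable {R : Type} [CommRing R] {m : ℕ}

lemma insert_sdiff_right' {t : Fin m} {S I : Finset (Fin m)} (ht : t ∉ I) :
    insert t S \ I = insert t (S \ I) := by
  ext a
  by_cases hat : a = t <;> simp [hat, ht]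

lemma insert_sdiff_insert' {t : Fin m} {S I : Finset (Fin m)} (ht : t ∉ S) :
    insert t S \ insert t I = S \ I := by
  ext a
  by_cases hat : a = t <;> simp [hat, ht]

lemma filter_card_split {t : Fin m} {S I : Finset (Fin m)} (hI : I ⊆ S) :
    (S.filter (fun a => a < t)).card
      = (I.filter (fun a => a < t)).card + ((S \ I).filter (fun a => a < t)).card := by
  conv_lhs => rw [← Finset.union_sdiff_of_subset hI]
  rw [Finset.filter_union, Finset.card_union_of_disjoint
    (Finset.disjoint_filter_filter Finset.disjoint_sdiff)]

lemma K0 (t : Fin m) (T : Finset (Fin m) → Finset (Fin m) → R) :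
    LC t (mulT T) = mulT (tAl t T) + mulT (pAl (tBl t T)) := by
  funext S
  rw [Pi.add_apply]
  by_cases ht : t ∈ S
  · -- cancellation case
    rw [LC, if_pos ht]
    set S' := S.erase t with hS'
    have ht' : t ∉ S' := Finset.notMem_erase t S
    have hS : S = insert t S' := (Finset.insert_erase ht).symm
    rw [hS, mulT_def', mulT_def', Finset.sum_powerset_insert ht',
      Finset.sum_powerset_insert ht']
    have hz1 : ∀ I ∈ S'.powerset,
        (-1 : R) ^ inv2 (insert t I) (insert t S' \ insert t I)
          * tAl t T (insert t I) (insert t S' \ insert t I) = 0 := by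
      intro I _
      rw [tAl_apply, if_pos (Finset.mem_insert_self t I), mul_zero]
    have hz2 : ∀ I ∈ S'.powerset,
        (-1 : R) ^ inv2 I (insert t S' \ I)
          * pAl (tBl t T) I (insert t S' \ I) = 0 := by
      intro I hI
      rw [Finset.mem_powerset] at hI
      have htI : t ∉ I := fun hc => ht' (hI hc)
      rw [pAl_apply, tBl_apply, insert_sdiff_right' htI,
        if_pos (Finset.mem_insert_self t _)]
      ring
    rw [Finset.sum_congr rfl hz1, Finset.sum_congr rfl hz2]
    simp only [Finset.sum_const_zero, add_zero, zero_add]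
    rw [← Finset.sum_add_distrib]
    symm
    apply Finset.sum_eq_zero
    intro I hI
    rw [Finset.mem_powerset] at hI
    have htI : t ∉ I := fun hc => ht' (hI hc)
    have htSI : t ∉ S' \ I := fun hc => ht' (Finset.mem_sdiff.mp hc).1
    rw [insert_sdiff_right' htI, insert_sdiff_insert' ht', tAl_apply, if_neg htI,
      pAl_apply, tBl_apply, if_neg htSI,
      inv2_insert_right htSI, inv2_insert_left htI,
      Finset.card_insert_of_notMem htI]
    have e := card_filter_lt_add_gt (i := t) (I := I) htI
    have hx : ((-1 : R)) ^ (inv2 I (S' \ I) + (I.filter (fun i => t < i)).card)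
          * (-1) ^ ((I.filter (fun a => a < t)).card)
        = -((-1) ^ (inv2 I (S' \ I) + ((S' \ I).filter (fun a => a < t)).card)
          * ((-1) ^ (I.card + 1) * (-1) ^ (((S' \ I).filter (fun a => a < t)).card))) := by
      rw [← pow_add, ← pow_add, ← pow_add]
      exact npow_eq_neg_npow _ _ (by omega)
    linear_combination (T (insert t I) (insert t (S' \ I))) * hx
  · -- Leibniz case
    rw [LC, if_neg ht, mulT_def', Finset.sum_powerset_insert ht, mul_add,
      Finset.mul_sum, Finset.mul_sum, mulT_def', mulT_def']
    have h1 : ∀ I ∈ S.powerset,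
        (-1 : R) ^ (S.filter (fun j => j < t)).card
            * ((-1) ^ inv2 I (insert t S \ I) * T I (insert t S \ I))
          = (-1 : R) ^ inv2 I (S \ I) * pAl (tBl t T) I (S \ I) := by
      intro I hI
      rw [Finset.mem_powerset] at hI
      have htI : t ∉ I := fun hc => ht (hI hc)
      have htSI : t ∉ S \ I := fun hc => ht (Finset.mem_sdiff.mp hc).1
      rw [insert_sdiff_right' htI, pAl_apply, tBl_apply, if_neg htSI,
        inv2_insert_right htSI]
      have e := card_filter_lt_add_gt (i := t) (I := I) htI
      have hc := filter_card_split (t := t) hI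
      have hx : ((-1 : R)) ^ ((S.filter (fun j => j < t)).card)
            * (-1) ^ (inv2 I (S \ I) + (I.filter (fun i => t < i)).card)
          = (-1) ^ (inv2 I (S \ I)) * ((-1) ^ I.card
            * (-1) ^ (((S \ I).filter (fun a => a < t)).card)) := by
        rw [← pow_add, ← pow_add, ← pow_add]
        exact npow_eq_npow _ _ (by omega)
      linear_combination (T I (insert t (S \ I))) * hx
    have h2 : ∀ I ∈ S.powerset,
        (-1 : R) ^ (S.filter (fun j => j < t)).card
            * ((-1) ^ inv2 (insert t I) (insert t S \ insert t I)
              * T (insert t I) (insert t S \ insert t I))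
          = (-1 : R) ^ inv2 I (S \ I) * tAl t T I (S \ I) := by
      intro I hI
      rw [Finset.mem_powerset] at hI
      have htI : t ∉ I := fun hc => ht (hI hc)
      rw [insert_sdiff_insert' ht, tAl_apply, if_neg htI, inv2_insert_left htI]
      have hc := filter_card_split (t := t) hI
      have hx : ((-1 : R)) ^ ((S.filter (fun j => j < t)).card)
            * (-1) ^ (inv2 I (S \ I) + ((S \ I).filter (fun j => j < t)).card)
          = (-1) ^ (inv2 I (S \ I)) * (-1) ^ ((I.filter (fun j => j < t)).card) := by
        rw [← pow_add, ← pow_add]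
        exact npow_eq_npow _ _ (by omega)
      linear_combination (T (insert t I) (S \ I)) * hx
    rw [Finset.sum_congr rfl h1, Finset.sum_congr rfl h2, add_comm]

end K0sec
end QDR
namespace QDR
section K1sec
variable {R : Type} [CommRing R] {m : ℕ}

lemma mulT_sum {ι : Type} (s : Finset ι) (f : ι → Finset (Fin m) → Finset (Fin m) → R) :
    mulT (∑ x ∈ s, f x) = ∑ x ∈ s, mulT (f x) :=
  map_sum (mulL (R := R) (m := m)) f s

lemma mulT_neg (T : Finset (Fin m) → Finset (Fin m) → R) : mulT (-T) = -mulT T :=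
  map_neg (mulL (R := R) (m := m)) T

lemma mulT_sub (X Y : Finset (Fin m) → Finset (Fin m) → R) :
    mulT (X - Y) = mulT X - mulT Y := by
  rw [sub_eq_add_neg, mulT_add, mulT_neg, ← sub_eq_add_neg]

/-- applied versions of the operator relations -/
lemma arel_AB (i j : Fin m) (T : Finset (Fin m) → Finset (Fin m) → R) :
    tAl i (tBl j T) = tBl j (tAl i T) := by
  have h := LinearMap.ext_iff.mp (rel_AB i j) T
  simpa only [Module.End.mul_apply] using h

lemma arel_AP (i : Fin m) (T : Finset (Fin m) → Finset (Fin m) → R) :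
    tAl i (pAl T) = -(pAl (tAl i T)) := by
  have h := LinearMap.ext_iff.mp (rel_PA i) T
  simp only [Module.End.mul_apply, LinearMap.neg_apply] at h
  rw [h, neg_neg]

lemma arel_BP (i : Fin m) (T : Finset (Fin m) → Finset (Fin m) → R) :
    tBl i (pAl T) = pAl (tBl i T) := by
  have h := LinearMap.ext_iff.mp (rel_PB i) T
  simpa only [Module.End.mul_apply] using h.symm

lemma arel_PP (T : Finset (Fin m) → Finset (Fin m) → R) : pAl (pAl T) = T := by
  have h := LinearMap.ext_iff.mp (rel_PP (R := R) (m := m)) T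
  simpa only [Module.End.mul_apply, Module.End.one_apply] using h

lemma arel_AA (i j : Fin m) (T : Finset (Fin m) → Finset (Fin m) → R) :
    tAl i (tAl j T) = -(tAl j (tAl i T)) := by
  have h := LinearMap.ext_iff.mp (rel_AA i j) T
  simpa only [Module.End.mul_apply, LinearMap.neg_apply] using h

lemma arel_BB (i j : Fin m) (T : Finset (Fin m) → Finset (Fin m) → R) :
    tBl i (tBl j T) = -(tBl j (tBl i T)) := by
  have h := LinearMap.ext_iff.mp (rel_BB i j) T
  simpa only [Module.End.mul_apply, LinearMap.neg_apply] using h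

lemma AL_apply_sum (w : Fin m → Fin m → R) (T : Finset (Fin m) → Finset (Fin m) → R) :
    AL w T = ∑ i : Fin m, ∑ j : Fin m, (if i < j then w i j else 0) • tAl i (tAl j T) := by
  simp only [AL, LinearMap.sum_apply, LinearMap.smul_apply, Module.End.mul_apply]

lemma BL_apply_sum (w : Fin m → Fin m → R) (T : Finset (Fin m) → Finset (Fin m) → R) :
    BL w T = ∑ i : Fin m, ∑ j : Fin m, (if i < j then w i j else 0) • tBl i (tBl j T) := by
  simp only [BL, LinearMap.sum_apply, LinearMap.smul_apply, Module.End.mul_apply]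

lemma LL_apply_sum (w : Fin m → Fin m → R) (T : Finset (Fin m) → Finset (Fin m) → R) :
    LL w T = ∑ i : Fin m, ∑ j : Fin m, (w i j) • pAl (tAl i (tBl j T)) := by
  simp only [LL, LinearMap.sum_apply, LinearMap.smul_apply, Module.End.mul_apply]

lemma K1_apply {w : Fin m → Fin m → R} (hw : ∀ i j, w i j = - w j i) (hd : ∀ i, w i i = 0)
    (T : Finset (Fin m) → Finset (Fin m) → R) :
    ctr2 w (mulT T) = mulT ((AL w + BL w - LL w) T) := by
  have step : ∀ i j : Fin m, (if i < j then w i j else 0) • LC i (LC j (mulT T))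
      = (if i < j then w i j else 0) • mulT (tAl i (tAl j T))
        + (if i < j then w i j else 0) • mulT (tBl i (tBl j T))
        + ((if i < j then w i j else 0) • mulT (pAl (tAl j (tBl i T)))
          - (if i < j then w i j else 0) • mulT (pAl (tAl i (tBl j T)))) := by
    intro i j
    rw [K0 j T, LC_add, K0 i (tAl j T), K0 i (pAl (tBl j T))]
    rw [show tBl i (tAl j T) = tAl j (tBl i T) from (arel_AB j i T).symm]
    rw [show tAl i (pAl (tBl j T)) = -(pAl (tAl i (tBl j T))) from arel_AP i _]
    rw [show tBl i (pAl (tBl j T)) = pAl (tBl i (tBl j T)) from arel_BP i _]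
    rw [arel_PP, mulT_neg]
    rw [smul_add, smul_add, smul_add, smul_neg]
    abel
  rw [ctr2_eq, Finset.sum_congr rfl (fun i _ => Finset.sum_congr rfl (fun j _ => step i j))]
  simp only [Finset.sum_add_distrib, Finset.sum_sub_distrib]
  have hA : (∑ i : Fin m, ∑ j : Fin m,
      (if i < j then w i j else 0) • mulT (tAl i (tAl j T))) = mulT (AL w T) := by
    rw [AL_apply_sum, mulT_sum]
    refine Finset.sum_congr rfl (fun i _ => ?_)
    rw [mulT_sum]
    exact Finset.sum_congr rfl (fun j _ => (mulT_smul _ _).symm)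
  have hB : (∑ i : Fin m, ∑ j : Fin m,
      (if i < j then w i j else 0) • mulT (tBl i (tBl j T))) = mulT (BL w T) := by
    rw [BL_apply_sum, mulT_sum]
    refine Finset.sum_congr rfl (fun i _ => ?_)
    rw [mulT_sum]
    exact Finset.sum_congr rfl (fun j _ => (mulT_smul _ _).symm)
  have hswap : (∑ i : Fin m, ∑ j : Fin m,
        (if i < j then w i j else 0) • mulT (pAl (tAl j (tBl i T))))
      = ∑ i : Fin m, ∑ j : Fin m,
        (if j < i then w j i else 0) • mulT (pAl (tAl i (tBl j T))) :=
    Finset.sum_comm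
  have hC : (∑ i : Fin m, ∑ j : Fin m,
        (if i < j then w i j else 0) • mulT (pAl (tAl j (tBl i T))))
        - (∑ i : Fin m, ∑ j : Fin m,
        (if i < j then w i j else 0) • mulT (pAl (tAl i (tBl j T))))
      = - mulT (LL w T) := by
    rw [hswap, ← Finset.sum_sub_distrib]
    have hL : mulT (LL w T) = ∑ i : Fin m, ∑ j : Fin m,
        (w i j) • mulT (pAl (tAl i (tBl j T))) := by
      rw [LL_apply_sum, mulT_sum]
      refine Finset.sum_congr rfl (fun i _ => ?_)
      rw [mulT_sum]
      exact Finset.sum_congr rfl (fun j _ => mulT_smul _ _)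
    rw [hL, ← Finset.sum_neg_distrib]
    refine Finset.sum_congr rfl (fun i _ => ?_)
    rw [← Finset.sum_sub_distrib, ← Finset.sum_neg_distrib]
    refine Finset.sum_congr rfl (fun j _ => ?_)
    rw [← sub_smul, ← neg_smul]
    congr 1
    rcases lt_trichotomy i j with h | h | h
    · rw [if_neg (asymm h), if_pos h, zero_sub]
    · subst h
      simp [hd i]
    · rw [if_pos h, if_neg (asymm h), sub_zero, hw j i]
  rw [hA, hB, hC]
  have happ : (AL w + BL w - LL w) T = AL w T + BL w T - LL w T := by
    rw [LinearMap.sub_apply, LinearMap.add_apply]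
  rw [happ, mulT_sub, mulT_add]
  abel

end K1sec
end QDR
namespace QDR
section CommSec
variable {R : Type} [CommRing R] {m : ℕ}

lemma end_comm_of_pointwise {M : Type} [AddCommGroup M] [Module R M]
    {ι κ : Type} [Fintype ι] [Fintype κ]
    (F : ι → Module.End R M) (G : κ → Module.End R M)
    (h : ∀ p q x, F p (G q x) = G q (F p x)) :
    Commute (∑ p, F p) (∑ q, G q) := by
  show _ * _ = _ * _
  apply LinearMap.ext
  intro x
  rw [Module.End.mul_apply, Module.End.mul_apply, LinearMap.sum_apply, LinearMap.sum_apply,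
    LinearMap.sum_apply, LinearMap.sum_apply]
  calc ∑ p, F p (∑ q, G q x)
      = ∑ p, ∑ q, F p (G q x) := Finset.sum_congr rfl (fun p _ => map_sum (F p) _ _)
    _ = ∑ q, ∑ p, G q (F p x) := by
        rw [Finset.sum_comm]
        exact Finset.sum_congr rfl (fun q _ => Finset.sum_congr rfl (fun p _ => h p q x))
    _ = ∑ q, G q (∑ p, F p x) := Finset.sum_congr rfl (fun q _ => (map_sum (G q) _ _).symm)

lemma pairA_through_P (a b : Fin m) (X : Finset (Fin m) → Finset (Fin m) → R) :
    tAl a (tAl b (pAl X)) = pAl (tAl a (tAl b X)) := by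
  rw [arel_AP b X, map_neg, arel_AP a (tAl b X), neg_neg]

lemma pairA_through_A (a b k : Fin m) (X : Finset (Fin m) → Finset (Fin m) → R) :
    tAl a (tAl b (tAl k X)) = tAl k (tAl a (tAl b X)) := by
  rw [arel_AA b k X, map_neg, arel_AA a k (tAl b X), neg_neg]

lemma pairA_through_B (a b k : Fin m) (X : Finset (Fin m) → Finset (Fin m) → R) :
    tAl a (tAl b (tBl k X)) = tBl k (tAl a (tAl b X)) := by
  rw [show tAl b (tBl k X) = tBl k (tAl b X) from arel_AB b k X,
    show tAl a (tBl k (tAl b X)) = tBl k (tAl a (tAl b X)) from arel_AB a k _]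

lemma pairB_through_P (a b : Fin m) (X : Finset (Fin m) → Finset (Fin m) → R) :
    tBl a (tBl b (pAl X)) = pAl (tBl a (tBl b X)) := by
  rw [arel_BP b X, arel_BP a (tBl b X)]

lemma pairB_through_A (a b k : Fin m) (X : Finset (Fin m) → Finset (Fin m) → R) :
    tBl a (tBl b (tAl k X)) = tAl k (tBl a (tBl b X)) := by
  rw [show tBl b (tAl k X) = tAl k (tBl b X) from (arel_AB k b X).symm,
    show tBl a (tAl k (tBl b X)) = tAl k (tBl a (tBl b X)) from (arel_AB k a _).symm]

lemma pairB_through_B (a b k : Fin m) (X : Finset (Fin m) → Finset (Fin m) → R) :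
    tBl a (tBl b (tBl k X)) = tBl k (tBl a (tBl b X)) := by
  rw [arel_BB b k X, map_neg, arel_BB a k (tBl b X), neg_neg]

lemma AL_eq_prod_sum (w : Fin m → Fin m → R) :
    AL w = ∑ p : Fin m × Fin m,
      (if p.1 < p.2 then w p.1 p.2 else 0) • (tAl p.1 * tAl p.2) := by
  rw [AL, ← Finset.univ_product_univ, Finset.sum_product]

lemma BL_eq_prod_sum (w : Fin m → Fin m → R) :
    BL w = ∑ p : Fin m × Fin m,
      (if p.1 < p.2 then w p.1 p.2 else 0) • (tBl p.1 * tBl p.2) := by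
  rw [BL, ← Finset.univ_product_univ, Finset.sum_product]

lemma LL_eq_prod_sum (w : Fin m → Fin m → R) :
    LL w = ∑ p : Fin m × Fin m, (w p.1 p.2) • (pAl * (tAl p.1 * tBl p.2)) := by
  rw [LL, ← Finset.univ_product_univ, Finset.sum_product]

lemma comm_AL_BL (w : Fin m → Fin m → R) : Commute (AL w) (BL w) := by
  rw [AL_eq_prod_sum, BL_eq_prod_sum]
  apply end_comm_of_pointwise
  intro p q T
  simp only [LinearMap.smul_apply, map_smul, Module.End.mul_apply]
  rw [smul_comm]
  congr 1
  congr 1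
  rw [pairA_through_B p.1 p.2 q.1, pairA_through_B p.1 p.2 q.2]

lemma comm_AL_LL (w : Fin m → Fin m → R) : Commute (AL w) (LL w) := by
  rw [AL_eq_prod_sum, LL_eq_prod_sum]
  apply end_comm_of_pointwise
  intro p q T
  simp only [LinearMap.smul_apply, map_smul, Module.End.mul_apply]
  rw [smul_comm]
  congr 1
  congr 1
  rw [pairA_through_P p.1 p.2, pairA_through_A p.1 p.2 q.1, pairA_through_B p.1 p.2 q.2]

lemma comm_BL_LL (w : Fin m → Fin m → R) : Commute (BL w) (LL w) := by
  rw [BL_eq_prod_sum, LL_eq_prod_sum]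
  apply end_comm_of_pointwise
  intro p q T
  simp only [LinearMap.smul_apply, map_smul, Module.End.mul_apply]
  rw [smul_comm]
  congr 1
  congr 1
  rw [pairB_through_P p.1 p.2, pairB_through_A p.1 p.2 q.1, pairB_through_B p.1 p.2 q.2]

end CommSec
end QDR
namespace QDR
section Nilp
variable {R : Type} [CommRing R] {m : ℕ}

/-- vanishing above total degree -/
def VanT (c : ℕ) (T : Finset (Fin m) → Finset (Fin m) → R) : Prop :=
  ∀ I J : Finset (Fin m), c ≤ I.card + J.card → T I J = 0

def VanF (c : ℕ) (α : Finset (Fin m) → R) : Prop :=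
  ∀ S : Finset (Fin m), c ≤ S.card → α S = 0

lemma vanT_top (T : Finset (Fin m) → Finset (Fin m) → R) : VanT (2 * m + 1) T := by
  intro I J h
  have h1 : I.card ≤ m := by simpa using Finset.card_le_univ I
  have h2 : J.card ≤ m := by simpa using Finset.card_le_univ J
  omega

lemma vanF_top (α : Finset (Fin m) → R) : VanF (m + 1) α := by
  intro S h
  have h1 : S.card ≤ m := by simpa using Finset.card_le_univ S
  omega

lemma vanT_mono {c c' : ℕ} (h : c ≤ c') {T : Finset (Fin m) → Finset (Fin m) → R}
    (hT : VanT c T) : VanT c' T := fun I J hIJ => hT I J (le_trans h hIJ)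

lemma vanF_mono {c c' : ℕ} (h : c ≤ c') {α : Finset (Fin m) → R}
    (hα : VanF c α) : VanF c' α := fun S hS => hα S (le_trans h hS)

lemma vanT_smul {c : ℕ} (r : R) {T : Finset (Fin m) → Finset (Fin m) → R}
    (hT : VanT c T) : VanT c (r • T) := by
  intro I J h
  simp only [Pi.smul_apply, smul_eq_mul, hT I J h, mul_zero]

lemma vanF_smul {c : ℕ} (r : R) {α : Finset (Fin m) → R}
    (hα : VanF c α) : VanF c (r • α) := by
  intro S h
  simp only [Pi.smul_apply, smul_eq_mul, hα S h, mul_zero]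

lemma vanT_sum {c : ℕ} {ι : Type} {s : Finset ι}
    {f : ι → Finset (Fin m) → Finset (Fin m) → R}
    (h : ∀ x ∈ s, VanT c (f x)) : VanT c (∑ x ∈ s, f x) := by
  intro I J hIJ
  rw [Finset.sum_apply, Finset.sum_apply]
  exact Finset.sum_eq_zero (fun x hx => h x hx I J hIJ)

lemma vanF_sum {c : ℕ} {ι : Type} {s : Finset ι}
    {f : ι → Finset (Fin m) → R}
    (h : ∀ x ∈ s, VanF c (f x)) : VanF c (∑ x ∈ s, f x) := by
  intro S hS
  rw [Finset.sum_apply]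
  exact Finset.sum_eq_zero (fun x hx => h x hx S hS)

lemma low1_tA (i : Fin m) {c : ℕ} {T : Finset (Fin m) → Finset (Fin m) → R}
    (h : VanT (c + 1) T) : VanT c (tAl i T) := by
  intro I J hIJ
  rw [tAl_apply]
  split_ifs with hi
  · rfl
  · rw [h (insert i I) J (by rw [Finset.card_insert_of_notMem hi]; omega), mul_zero]

lemma low1_tB (j : Fin m) {c : ℕ} {T : Finset (Fin m) → Finset (Fin m) → R}
    (h : VanT (c + 1) T) : VanT c (tBl j T) := by
  intro I J hIJ
  rw [tBl_apply]
  split_ifs with hj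
  · rfl
  · rw [h I (insert j J) (by rw [Finset.card_insert_of_notMem hj]; omega), mul_zero]

lemma low0_pA {c : ℕ} {T : Finset (Fin m) → Finset (Fin m) → R}
    (h : VanT c T) : VanT c (pAl T) := by
  intro I J hIJ
  rw [pAl_apply, h I J hIJ, mul_zero]

lemma low1_LC (i : Fin m) {c : ℕ} {α : Finset (Fin m) → R}
    (h : VanF (c + 1) α) : VanF c (LC i α) := by
  intro S hS
  rw [LC]
  split_ifs with hi
  · rfl
  · rw [h (insert i S) (by rw [Finset.card_insert_of_notMem hi]; omega), mul_zero]

/-- an endomorphism that lowers the vanishing threshold by two -/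
def Low2 (f : Module.End R (Finset (Fin m) → Finset (Fin m) → R)) : Prop :=
  ∀ c T, VanT (c + 2) T → VanT c (f T)

def Low2F (f : Module.End R (Finset (Fin m) → R)) : Prop :=
  ∀ c α, VanF (c + 2) α → VanF c (f α)

lemma low2_AL (w : Fin m → Fin m → R) : Low2 (AL w) := by
  intro c T hT
  rw [AL_apply_sum]
  apply vanT_sum; intro i _
  apply vanT_sum; intro j _
  exact vanT_smul _ (low1_tA i (low1_tA j hT))

lemma low2_BL (w : Fin m → Fin m → R) : Low2 (BL w) := by
  intro c T hT
  rw [BL_apply_sum]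
  apply vanT_sum; intro i _
  apply vanT_sum; intro j _
  exact vanT_smul _ (low1_tB i (low1_tB j hT))

lemma low2_LL (w : Fin m → Fin m → R) : Low2 (LL w) := by
  intro c T hT
  rw [LL_apply_sum]
  apply vanT_sum; intro i _
  apply vanT_sum; intro j _
  exact vanT_smul _ (low0_pA (low1_tA i (low1_tB j hT)))

lemma low2_add {f g : Module.End R (Finset (Fin m) → Finset (Fin m) → R)}
    (hf : Low2 f) (hg : Low2 g) : Low2 (f + g) := by
  intro c T hT I J hIJ
  rw [LinearMap.add_apply, Pi.add_apply, Pi.add_apply,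
    hf c T hT I J hIJ, hg c T hT I J hIJ, add_zero]

lemma low2_neg {f : Module.End R (Finset (Fin m) → Finset (Fin m) → R)}
    (hf : Low2 f) : Low2 (-f) := by
  intro c T hT I J hIJ
  rw [LinearMap.neg_apply, Pi.neg_apply, Pi.neg_apply, hf c T hT I J hIJ, neg_zero]

lemma low2_sub {f g : Module.End R (Finset (Fin m) → Finset (Fin m) → R)}
    (hf : Low2 f) (hg : Low2 g) : Low2 (f - g) := by
  have := low2_add hf (low2_neg hg)
  rwa [sub_eq_add_neg]

lemma low2_CL (w : Fin m → Fin m → R) : Low2F (CL w) := by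
  intro c α hα
  rw [CL_apply, ctr2_eq]
  apply vanF_sum; intro i _
  apply vanF_sum; intro j _
  exact vanF_smul _ (low1_LC i (low1_LC j hα))

lemma low2F_neg {f : Module.End R (Finset (Fin m) → R)}
    (hf : Low2F f) : Low2F (-f) := by
  intro c α hα S hS
  rw [LinearMap.neg_apply, Pi.neg_apply, hf c α hα S hS, neg_zero]

lemma low2_pow {f : Module.End R (Finset (Fin m) → Finset (Fin m) → R)} (hf : Low2 f) :
    ∀ (a : ℕ) (c : ℕ) (T : Finset (Fin m) → Finset (Fin m) → R),
      VanT (c + 2 * a) T → VanT c ((f ^ a) T) := by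
  intro a
  induction a with
  | zero => intro c T h; rw [pow_zero, Module.End.one_apply]; exact h
  | succ a ih =>
    intro c T h
    rw [pow_succ', Module.End.mul_apply]
    exact hf c ((f ^ a) T) (ih (c + 2) T (vanT_mono (by omega) h))

lemma low2F_pow {f : Module.End R (Finset (Fin m) → R)} (hf : Low2F f) :
    ∀ (a : ℕ) (c : ℕ) (α : Finset (Fin m) → R),
      VanF (c + 2 * a) α → VanF c ((f ^ a) α) := by
  intro a
  induction a with
  | zero => intro c α h; rw [pow_zero, Module.End.one_apply]; exact h
  | succ a ih =>
    intro c α h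
    rw [pow_succ', Module.End.mul_apply]
    exact hf c ((f ^ a) α) (ih (c + 2) α (vanF_mono (by omega) h))

lemma vanT_zero_eq {T : Finset (Fin m) → Finset (Fin m) → R} (h : VanT 0 T) : T = 0 := by
  funext I J
  exact h I J (Nat.zero_le _)

lemma vanF_zero_eq {α : Finset (Fin m) → R} (h : VanF 0 α) : α = 0 := by
  funext S
  exact h S (Nat.zero_le _)

lemma mixed_pow_zero {x y : Module.End R (Finset (Fin m) → Finset (Fin m) → R)}
    (hx : Low2 x) (hy : Low2 y) {a b : ℕ} (h : m + 1 ≤ a + b) : x ^ a * y ^ b = 0 := by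
  apply LinearMap.ext
  intro T
  rw [Module.End.mul_apply, LinearMap.zero_apply]
  have h0 : VanT (2 * a + 2 * b) T :=
    vanT_mono (by omega) (vanT_top T)
  have h1 : VanT (0 + 2 * a) ((y ^ b) T) := by
    rw [zero_add]
    exact low2_pow hy b (2 * a) T (by rw [show 2*a + 2*b = 2*a + 2*b from rfl]; exact h0)
  exact vanT_zero_eq (low2_pow hx a 0 ((y ^ b) T) h1) ▸ rfl

lemma mixed_pow_zero_F {x y : Module.End R (Finset (Fin m) → R)}
    (hx : Low2F x) (hy : Low2F y) {a b : ℕ} (h : m + 1 ≤ a + b) : x ^ a * y ^ b = 0 := by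
  apply LinearMap.ext
  intro α
  rw [Module.End.mul_apply, LinearMap.zero_apply]
  have h0 : VanF (2 * a + 2 * b) α :=
    vanF_mono (by omega) (vanF_top α)
  have h1 : VanF (0 + 2 * a) ((y ^ b) α) := by
    rw [zero_add]
    exact low2F_pow hy b (2 * a) α h0
  exact vanF_zero_eq (low2F_pow hx a 0 ((y ^ b) α) h1) ▸ rfl

end Nilp
end QDR
namespace QDR
section Texp
variable (R : Type) {A : Type} [CommRing R] [Algebra ℚ R] [Ring A] [Algebra R A]

/-- inverse factorial coefficients -/
def qc (n : ℕ) : R := algebraMap ℚ R (1 / n.factorial)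

/-- truncated exponential -/
def texp (M : ℕ) (x : A) : A := ∑ n ∈ Finset.range M, qc R n • x ^ n

variable {R}

lemma qc_mul_choose {n c : ℕ} (h : c ≤ n) :
    qc R n * (n.choose c : R) = qc R c * qc R (n - c) := by
  unfold qc
  rw [← map_natCast (algebraMap ℚ R) (n.choose c), ← map_mul, ← map_mul]
  congr 1
  have h2 : (n.choose c) * (c.factorial * (n - c).factorial) = n.factorial := by
    rw [← mul_assoc]
    exact Nat.choose_mul_factorial_mul_factorial h
  have hc : (c.factorial : ℚ) ≠ 0 := Nat.cast_ne_zero.mpr c.factorial_ne_zero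
  have hnc : ((n - c).factorial : ℚ) ≠ 0 := Nat.cast_ne_zero.mpr (n - c).factorial_ne_zero
  have hn : (n.factorial : ℚ) ≠ 0 := Nat.cast_ne_zero.mpr n.factorial_ne_zero
  field_simp
  rw [← mul_assoc] at h2
  exact_mod_cast h2

lemma ring_inverse_factorial (n : ℕ) : Ring.inverse (n.factorial : R) = qc R n := by
  have hn : (n.factorial : ℚ) ≠ 0 := Nat.cast_ne_zero.mpr n.factorial_ne_zero
  have h1 : (n.factorial : R) * qc R n = 1 := by
    unfold qc
    rw [← map_natCast (algebraMap ℚ R) n.factorial, ← map_mul,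
      mul_one_div, div_self hn, map_one]
  have h2 : qc R n * (n.factorial : R) = 1 := by rw [mul_comm]; exact h1
  let u : Rˣ := ⟨(n.factorial : R), qc R n, h1, h2⟩
  exact Ring.inverse_unit u

lemma texp_mul {M : ℕ} {x y : A} (hc : Commute x y)
    (hxy : ∀ a b : ℕ, M ≤ a + b → x ^ a * y ^ b = 0) :
    texp R M (x + y) = texp R M x * texp R M y := by
  have key : ∀ z : A, ∀ r : R, z * algebraMap R A r = r • z := fun z r => by
    rw [Algebra.smul_def, Algebra.commutes]
  -- RHS as a double sum
  have hRHS : texp R M x * texp R M y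
      = ∑ p ∈ Finset.range M ×ˢ Finset.range M,
          (qc R p.1 * qc R p.2) • (x ^ p.1 * y ^ p.2) := by
    rw [texp, texp, Finset.sum_mul_sum, Finset.sum_product]
    exact Finset.sum_congr rfl (fun a _ => Finset.sum_congr rfl (fun b _ =>
      smul_mul_smul_comm (qc R a) (x ^ a) (qc R b) (y ^ b)))
  -- drop the terms with `M ≤ a + b`
  have hfilter : (∑ p ∈ Finset.range M ×ˢ Finset.range M,
        (qc R p.1 * qc R p.2) • (x ^ p.1 * y ^ p.2))
      = ∑ p ∈ (Finset.range M ×ˢ Finset.range M).filter (fun p => p.1 + p.2 < M),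
          (qc R p.1 * qc R p.2) • (x ^ p.1 * y ^ p.2) := by
    symm
    apply Finset.sum_filter_of_ne
    intro p _ hne
    by_contra hlt
    exact hne (by rw [hxy p.1 p.2 (by omega), smul_zero])
  -- LHS as a sigma sum
  have hLHS : texp R M (x + y)
      = ∑ n ∈ Finset.range M, ∑ c ∈ Finset.range (n + 1),
          (qc R c * qc R (n - c)) • (x ^ c * y ^ (n - c)) := by
    rw [texp]
    apply Finset.sum_congr rfl
    intro n _
    rw [hc.add_pow n, Finset.smul_sum]
    apply Finset.sum_congr rfl
    intro c hcm
    rw [Finset.mem_range] at hcm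
    rw [← map_natCast (algebraMap R A) (n.choose c), key, smul_smul, qc_mul_choose (by omega)]
  rw [hLHS, hRHS, hfilter,
    Finset.sum_sigma' (Finset.range M) (fun n => Finset.range (n + 1))
      (fun n c => (qc R c * qc R (n - c)) • (x ^ c * y ^ (n - c)))]
  apply Finset.sum_nbij' (fun q => (q.2, q.1 - q.2)) (fun p => ⟨p.1 + p.2, p.1⟩)
  · rintro ⟨n, c⟩ hq
    simp only [Finset.mem_sigma, Finset.mem_range] at hq
    simp only [Finset.mem_filter, Finset.mem_product, Finset.mem_range]
    omega
  · rintro ⟨a, b⟩ hp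
    simp only [Finset.mem_filter, Finset.mem_product, Finset.mem_range] at hp
    simp only [Finset.mem_sigma, Finset.mem_range]
    omega
  · rintro ⟨n, c⟩ hq
    simp only [Finset.mem_sigma, Finset.mem_range] at hq
    simp only [Sigma.mk.inj_iff, heq_eq_eq]
    constructor
    · omega
    · simp
  · rintro ⟨a, b⟩ hp
    simp only [Prod.mk.injEq]
    exact ⟨by trivial, by omega⟩
  · rintro ⟨n, c⟩ hq
    rfl

lemma texp_zero {M : ℕ} (hM : 1 ≤ M) : texp R M (0 : A) = 1 := by
  rw [texp]
  rw [Finset.sum_eq_single 0]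
  · rw [pow_zero]
    show qc R 0 • (1 : A) = 1
    unfold qc
    simp
  · intro n _ hn
    rw [zero_pow hn, smul_zero]
  · intro h0
    exact absurd (Finset.mem_range.mpr (by omega)) h0

lemma texp_mul_neg {M : ℕ} (hM : 1 ≤ M) {x : A}
    (hxx : ∀ a b : ℕ, M ≤ a + b → x ^ a * (-x) ^ b = 0)
    (hxx' : ∀ a b : ℕ, M ≤ a + b → (-x) ^ a * x ^ b = 0) :
    texp R M x * texp R M (-x) = 1 ∧ texp R M (-x) * texp R M x = 1 := by
  constructor
  · rw [← texp_mul (Commute.neg_right (Commute.refl x)) hxx, add_neg_cancel, texp_zero hM]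
  · rw [← texp_mul (Commute.neg_left (Commute.refl x)) hxx', neg_add_cancel, texp_zero hM]

end Texp
end QDR
namespace QDR
section Gauge
variable {R : Type} [CommRing R] [Algebra ℚ R] {m : ℕ} {w : Fin m → Fin m → R}

lemma LL_pow_iter (w : Fin m → Fin m → R) :
    ∀ (n : ℕ) (T : Finset (Fin m) → Finset (Fin m) → R),
      ((LL w) ^ n) T = (LwT w)^[n] T := by
  intro n
  induction n with
  | zero => intro T; rw [pow_zero, Module.End.one_apply, Function.iterate_zero_apply]
  | succ n ih =>
    intro T
    rw [pow_succ', Module.End.mul_apply, ih T, LL_apply]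
    exact (Function.iterate_succ_apply' (LwT w) n T).symm

lemma qwedge_eq_texp (α β : Finset (Fin m) → R) :
    qwedge w 1 α β = mulT (texp R (m + 1) (LL w) (tens α β)) := by
  rw [texp]
  have happ : ((∑ n ∈ Finset.range (m + 1), qc R n • (LL w) ^ n) (tens α β))
      = ∑ n ∈ Finset.range (m + 1), qc R n • (((LL w) ^ n) (tens α β)) := by
    simp only [LinearMap.sum_apply, LinearMap.smul_apply]
  rw [happ, mulT_sum]
  unfold qwedge
  apply Finset.sum_congr rfl
  intro n _
  rw [mulT_smul, one_pow, mul_one, ring_inverse_factorial, LL_pow_iter]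

lemma conj_pow {f : Module.End R (Finset (Fin m) → R)}
    {g : Module.End R (Finset (Fin m) → Finset (Fin m) → R)}
    (h : ∀ T, f (mulT T) = mulT (g T)) :
    ∀ (n : ℕ) T, (f ^ n) (mulT T) = mulT ((g ^ n) T) := by
  intro n
  induction n with
  | zero => intro T; rw [pow_zero, pow_zero, Module.End.one_apply, Module.End.one_apply]
  | succ n ih =>
    intro T
    rw [pow_succ, pow_succ, Module.End.mul_apply, Module.End.mul_apply, h T, ih (g T)]

lemma conj_texp (hw : ∀ i j, w i j = - w j i) (hd : ∀ i, w i i = 0)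
    (T : Finset (Fin m) → Finset (Fin m) → R) :
    texp R (m + 1) (-(CL w)) (mulT T)
      = mulT (texp R (m + 1) (-(AL w + BL w - LL w)) T) := by
  have hbase : ∀ X, (-(CL w)) (mulT X) = mulT ((-(AL w + BL w - LL w)) X) := by
    intro X
    rw [LinearMap.neg_apply, LinearMap.neg_apply, CL_apply, K1_apply hw hd, mulT_neg]
  have hpow := conj_pow hbase
  rw [texp, texp]
  simp only [LinearMap.sum_apply, LinearMap.smul_apply]
  rw [mulT_sum]
  apply Finset.sum_congr rfl
  intro n _
  rw [mulT_smul, hpow n T]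

lemma AL_pow_tens (w : Fin m → Fin m → R) :
    ∀ (n : ℕ) (α β : Finset (Fin m) → R),
      ((AL w) ^ n) (tens α β) = tens (((CL w) ^ n) α) β := by
  intro n
  induction n with
  | zero =>
    intro α β
    rw [pow_zero, pow_zero, Module.End.one_apply, Module.End.one_apply]
  | succ n ih =>
    intro α β
    rw [pow_succ', pow_succ', Module.End.mul_apply, Module.End.mul_apply, ih α β,
      AL_tens, ← CL_apply]

lemma BL_pow_tens (w : Fin m → Fin m → R) :
    ∀ (n : ℕ) (α β : Finset (Fin m) → R),
      ((BL w) ^ n) (tens α β) = tens α (((CL w) ^ n) β) := by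
  intro n
  induction n with
  | zero =>
    intro α β
    rw [pow_zero, pow_zero, Module.End.one_apply, Module.End.one_apply]
  | succ n ih =>
    intro α β
    rw [pow_succ', pow_succ', Module.End.mul_apply, Module.End.mul_apply, ih α β,
      BL_tens, ← CL_apply]

lemma texp_AL_tens (α β : Finset (Fin m) → R) :
    texp R (m + 1) (AL w) (tens α β) = tens (texp R (m + 1) (CL w) α) β := by
  rw [texp, texp]
  simp only [LinearMap.sum_apply, LinearMap.smul_apply]
  rw [tens_sum_left]
  apply Finset.sum_congr rfl
  intro n _
  rw [AL_pow_tens, tens_smul_left]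

lemma texp_BL_tens (α β : Finset (Fin m) → R) :
    texp R (m + 1) (BL w) (tens α β) = tens α (texp R (m + 1) (CL w) β) := by
  rw [texp, texp]
  simp only [LinearMap.sum_apply, LinearMap.smul_apply]
  rw [tens_sum_right]
  apply Finset.sum_congr rfl
  intro n _
  rw [BL_pow_tens, tens_smul_right]

lemma texp_LL_split (w : Fin m → Fin m → R) :
    texp R (m + 1) (LL w)
      = texp R (m + 1) (-(AL w + BL w - LL w))
        * (texp R (m + 1) (AL w) * texp R (m + 1) (BL w)) := by
  have cAB : Commute (AL w) (BL w) := comm_AL_BL w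
  have hDlow : Low2 (AL w + BL w - LL w) :=
    low2_sub (low2_add (low2_AL w) (low2_BL w)) (low2_LL w)
  have h1 : texp R (m + 1) (AL w + BL w)
      = texp R (m + 1) (AL w) * texp R (m + 1) (BL w) :=
    texp_mul cAB (fun a b hb => mixed_pow_zero (low2_AL w) (low2_BL w) hb)
  have cA_sum : Commute (AL w) (AL w + BL w) := (Commute.refl _).add_right cAB
  have cB_sum : Commute (BL w) (AL w + BL w) := (cAB.symm).add_right (Commute.refl _)
  have cL_sum : Commute (LL w) (AL w + BL w) :=
    ((comm_AL_LL w).symm).add_right ((comm_BL_LL w).symm)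
  have cD_sum : Commute (AL w + BL w - LL w) (AL w + BL w) :=
    (cA_sum.add_left cB_sum).sub_left cL_sum
  have h2 : texp R (m + 1) (-(AL w + BL w - LL w) + (AL w + BL w))
      = texp R (m + 1) (-(AL w + BL w - LL w)) * texp R (m + 1) (AL w + BL w) :=
    texp_mul cD_sum.neg_left
      (fun a b hb => mixed_pow_zero (low2_neg hDlow)
        (low2_add (low2_AL w) (low2_BL w)) hb)
  have harg : -(AL w + BL w - LL w) + (AL w + BL w) = LL w := by abel
  rw [← h1, ← h2, harg]

/-- The gauge form of the quantum wedge product. -/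
theorem qwedge_gauge (hw : ∀ i j, w i j = - w j i) (hd : ∀ i, w i i = 0)
    (α β : Finset (Fin m) → R) :
    qwedge w 1 α β = texp R (m + 1) (-(CL w))
      (mulT (tens (texp R (m + 1) (CL w) α) (texp R (m + 1) (CL w) β))) := by
  rw [qwedge_eq_texp, texp_LL_split, Module.End.mul_apply, Module.End.mul_apply,
    texp_BL_tens, texp_AL_tens, conj_texp hw hd]

lemma texp_CL_inv (w : Fin m → Fin m → R) :
    (∀ x, texp R (m + 1) (CL w) (texp R (m + 1) (-(CL w)) x) = x) := by
  have hmix : ∀ a b : ℕ, m + 1 ≤ a + b → (CL w) ^ a * (-(CL w)) ^ b = 0 :=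
    fun a b hb => mixed_pow_zero_F (low2_CL w) (low2F_neg (low2_CL w)) hb
  have hmix' : ∀ a b : ℕ, m + 1 ≤ a + b → (-(CL w)) ^ a * (CL w) ^ b = 0 :=
    fun a b hb => mixed_pow_zero_F (low2F_neg (low2_CL w)) (low2_CL w) hb
  have hEE := (texp_mul_neg (R := R) (by omega) hmix hmix').1
  intro x
  have := LinearMap.ext_iff.mp hEE x
  simpa only [Module.End.mul_apply, Module.End.one_apply] using this

lemma qwedge_gauge' (hw : ∀ i j, w i j = - w j i) (hd : ∀ i, w i i = 0)
    (α β : Finset (Fin m) → R) :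
    texp R (m + 1) (CL w) (qwedge w 1 α β)
      = mulT (tens (texp R (m + 1) (CL w) α) (texp R (m + 1) (CL w) β)) := by
  rw [qwedge_gauge hw hd α β,
    texp_CL_inv w (mulT (tens (texp R (m + 1) (CL w) α) (texp R (m + 1) (CL w) β)))]

theorem qwedge_assoc_general (hw : ∀ i j, w i j = - w j i) (hd : ∀ i, w i i = 0)
    (α β γ : Finset (Fin m) → R) :
    qwedge w 1 (qwedge w 1 α β) γ = qwedge w 1 α (qwedge w 1 β γ) := by
  rw [qwedge_gauge hw hd (qwedge w 1 α β) γ, qwedge_gauge hw hd α (qwedge w 1 β γ),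
    qwedge_gauge' hw hd α β, qwedge_gauge' hw hd β γ]
  exact congrArg (fun z => texp R (m + 1) (-(CL w)) z) (wedge_assoc _ _ _)

end Gauge
end QDR
namespace QDR

/-- For bivectors `w₁, …, w_N ∈ Λ²(V)` and formal parameters
`h₁, …, h_N`, the multiparameter quantum exterior product
`α ∧_h⃗ β = m(exp(h₁ L_{w₁} + ⋯ + h_N L_{w_N})(α ⊗ β))` on `Λ(V*)[h₁,…,h_N]`
is supercommutative and associative.  (Note `Σₐ hₐ L_{wₐ} = L_W` for the
`k[h₁,…,h_N]`-valued bivector `W = Σₐ hₐ wₐ`.) -/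
theorem multiparameter_quantum_exterior_product
    {k : Type} [Field k] [CharZero k] {m N : ℕ}
    (w : Fin N → Fin m → Fin m → k) (hw : ∀ a i j, w a i j = - w a j i) :
    (∀ (p q : ℕ) (α β : Finset (Fin m) → MvPolynomial (Fin N) k),
      IsHomog α p → IsHomog β q →
      qwedge (fun i j => ∑ a : Fin N, MvPolynomial.X a * MvPolynomial.C (w a i j)) 1 α β
        = ((-1 : MvPolynomial (Fin N) k) ^ (p * q)) •
          qwedge (fun i j => ∑ a : Fin N, MvPolynomial.X a * MvPolynomial.C (w a i j)) 1 β α) ∧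
    (∀ α β γ : Finset (Fin m) → MvPolynomial (Fin N) k,
      qwedge (fun i j => ∑ a : Fin N, MvPolynomial.X a * MvPolynomial.C (w a i j)) 1
          (qwedge (fun i j => ∑ a : Fin N, MvPolynomial.X a * MvPolynomial.C (w a i j)) 1 α β) γ
        = qwedge (fun i j => ∑ a : Fin N, MvPolynomial.X a * MvPolynomial.C (w a i j)) 1 α
          (qwedge (fun i j => ∑ a : Fin N, MvPolynomial.X a * MvPolynomial.C (w a i j)) 1 β γ)) := by
  have h0 : ∀ (a : Fin N) (i : Fin m), w a i i = 0 := by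
    intro a i
    have h1 := hw a i i
    have h2 : (2 : k) * w a i i = 0 := by linear_combination h1
    rcases mul_eq_zero.mp h2 with h | h
    · exact absurd h two_ne_zero
    · exact h
  set W : Fin m → Fin m → MvPolynomial (Fin N) k :=
    fun i j => ∑ a : Fin N, MvPolynomial.X a * MvPolynomial.C (w a i j) with hWdef
  have hW : ∀ i j, W i j = - W j i := by
    intro i j
    show (∑ a : Fin N, MvPolynomial.X a * MvPolynomial.C (w a i j))
      = -(∑ a : Fin N, MvPolynomial.X a * MvPolynomial.C (w a j i))
    have hterm : ∀ a : Fin N, a ∈ (Finset.univ : Finset (Fin N)) →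
        MvPolynomial.X a * MvPolynomial.C (w a i j)
          = -(MvPolynomial.X a * MvPolynomial.C (w a j i)) := by
      intro a _
      rw [hw a i j, map_neg, mul_neg]
    rw [Finset.sum_congr rfl hterm, Finset.sum_neg_distrib]
  have hd : ∀ i, W i i = 0 := by
    intro i
    show (∑ a : Fin N, MvPolynomial.X a * MvPolynomial.C (w a i i)) = 0
    simp [h0]
  constructor
  · intro p q α β hα hβ
    exact qwedge_supercomm hW hα hβ 1
  · intro α β γ
    exact qwedge_assoc_general hW hd α β γ

end QDR
end

section
/- Let (Mₙ) be a sequence of square matrices over a field k with M_{n+1} = [[Mₙ, -I],[I, Mₙ+2I]] in block form. Then for any λ ∈ k, det(M_{n+1} + λI) = det(Mₙ + (λ+1)I)². -/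
/-!
With `X = M + (λ + 1) I` the shifted matrix is `[[X - I, -I], [I, X + I]]`. Since its lower-left
block is `I`, which commutes with everything, its determinant is `det((X - I)(X + I) + I) = det(X²)`.
-/

open Matrix

theorem det_fromBlocks_zero_neg_one_one_zero {R : Type*} [CommRing R] {n : Type*} [Fintype n]
    [DecidableEq n] : (fromBlocks 0 (-1) 1 0 : Matrix (n ⊕ n) (n ⊕ n) R).det = 1 := by
  have hfactor : (fromBlocks 0 (-1) 1 0 : Matrix (n ⊕ n) (n ⊕ n) R) =
      fromBlocks 1 (-1) 0 1 * fromBlocks 1 0 1 1 * fromBlocks 1 (-1) 0 1 := by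
    simp [fromBlocks_multiply]
  simp [hfactor]

theorem det_fromBlocks_one₂₁ {R : Type*} [CommRing R] {n : Type*} [Fintype n] [DecidableEq n]
    (A B D : Matrix n n R) : (fromBlocks A B 1 D).det = (A * D - B).det := by
  have hfactor : fromBlocks A B 1 D = fromBlocks 0 (-1) 1 0 * fromBlocks 1 D (-A) (-B) := by
    simp [fromBlocks_multiply]
  rw [hfactor, det_mul, det_fromBlocks_zero_neg_one_one_zero, one_mul, det_fromBlocks_one₁₁]
  congr 1
  noncomm_ring

/-- If `M_{n+1} = [[Mₙ, -I],[I, Mₙ + 2I]]` in block form, then for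
any `λ ∈ k`, `det(M_{n+1} + λI) = det(Mₙ + (λ+1)I)²`. -/
theorem det_block_recursion_step
    {k : Type} [Field k] {ι : Type} [Fintype ι] [DecidableEq ι]
    (M : Matrix ι ι k) (lam : k) :
    (Matrix.fromBlocks M (-1) 1 (M + (2 : k) • 1) + lam • 1).det
      = ((M + (lam + 1) • 1).det) ^ 2 := by
  set X : Matrix ι ι k := M + (lam + 1) • 1
  have hblocks : fromBlocks M (-1) 1 (M + (2 : k) • 1) + lam • (1 : Matrix (ι ⊕ ι) (ι ⊕ ι) k) =
      fromBlocks (X - 1) (-1) 1 (X + 1) := by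
    rw [← fromBlocks_one, fromBlocks_smul, fromBlocks_add]
    congr 1 <;> simp only [X, smul_zero, add_zero] <;> module
  rw [hblocks, det_fromBlocks_one₂₁, show (X - 1) * (X + 1) - -1 = X * X by noncomm_ring,
    det_mul, sq]
end
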